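/- arXiv:1604.01993 — 9 statements merged into one kernel-verified Lean document; each statement's English description precedes it below -/
import Mathlib

section
/- In a geodesic metric space satisfying the non-expansive projection property (for every closed weakly convex set C and all x, y and nearest points x_C ∈ π_C(x), y_C ∈ π_C(y), d(x_C, y_C) ≤ d(x, y)), if a geodesic γ is Birkhoff-orthogonal to a geodesic η at their common starting point p (i.e. d(p, γ_t) ≤ d(η_s, γ_t) for all s, t ∈ [0,1]), then η is Birkhoff-orthogonal to γ at p. -/
open Set Metric Filter

variable {M : Type*}

def IsGeodesic [MetricSpace M] (γ : ℝ → M) : Prop :=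
  ∀ s ∈ Set.Icc (0:ℝ) 1, ∀ t ∈ Set.Icc (0:ℝ) 1,
    dist (γ s) (γ t) = |s - t| * dist (γ 0) (γ 1)

def GeodesicSpace (M : Type*) [MetricSpace M] : Prop :=
  ∀ x y : M, ∃ γ : ℝ → M, IsGeodesic γ ∧ γ 0 = x ∧ γ 1 = y

def Perp [MetricSpace M] (γ η : ℝ → M) : Prop :=
  ∀ t ∈ Set.Icc (0:ℝ) 1, ∀ s ∈ Set.Icc (0:ℝ) 1,
    dist (γ 0) (γ t) ≤ dist (η s) (γ t)

def SO (M : Type*) [MetricSpace M] : Prop :=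
  ∀ γ η : ℝ → M, IsGeodesic γ → IsGeodesic η → γ 0 = η 0 → Perp γ η → Perp η γ

def WeaklyConvex [MetricSpace M] (C : Set M) : Prop :=
  ∀ x ∈ C, ∀ y ∈ C, ∃ γ : ℝ → M, IsGeodesic γ ∧ γ 0 = x ∧ γ 1 = y ∧
    ∀ t ∈ Set.Icc (0:ℝ) 1, γ t ∈ C

def GeoConvex [MetricSpace M] (C : Set M) : Prop :=
  ∀ γ : ℝ → M, IsGeodesic γ → γ 0 ∈ C → γ 1 ∈ C → ∀ t ∈ Set.Icc (0:ℝ) 1, γ t ∈ C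

def NearestPt [MetricSpace M] (C : Set M) (x y : M) : Prop :=
  y ∈ C ∧ dist x y = Metric.infDist x C

def NE (M : Type*) [MetricSpace M] : Prop :=
  ∀ C : Set M, IsClosed C → WeaklyConvex C → ∀ x y xC yC : M,
    NearestPt C x xC → NearestPt C y yC → dist xC yC ≤ dist x y

def BusemannConvex (M : Type*) [MetricSpace M] : Prop :=
  ∀ γ η : ℝ → M, IsGeodesic γ → IsGeodesic η →
    ConvexOn ℝ (Set.Icc (0:ℝ) 1) (fun t => dist (γ t) (η t))

lemma geodesic_continuousOn [MetricSpace M] {η : ℝ → M} (hη : IsGeodesic η) :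
    ContinuousOn η (Set.Icc (0:ℝ) 1) := by
  rw [Metric.continuousOn_iff]
  intro b hb ε hε
  refine ⟨ε / (dist (η 0) (η 1) + 1), by positivity, fun a ha hab => ?_⟩
  rw [hη a ha b hb]
  calc |a - b| * dist (η 0) (η 1) ≤ |a - b| * (dist (η 0) (η 1) + 1) := by
        have := abs_nonneg (a - b); nlinarith
    _ < ε / (dist (η 0) (η 1) + 1) * (dist (η 0) (η 1) + 1) := by
        apply mul_lt_mul_of_pos_right _ (by positivity)
        rwa [← Real.dist_eq]
    _ = ε := by field_simp

lemma geodesic_image_weaklyConvex [MetricSpace M] {η : ℝ → M} (hη : IsGeodesic η) :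
    WeaklyConvex (η '' Set.Icc (0:ℝ) 1) := by
  rintro x ⟨a, ha, rfl⟩ y ⟨b, hb, rfl⟩
  refine ⟨fun t => η (a + t * (b - a)), ?_, by simp, by simp, ?_⟩
  · intro s hs t ht
    have hmem : ∀ u ∈ Set.Icc (0:ℝ) 1, a + u * (b - a) ∈ Set.Icc (0:ℝ) 1 := by
      intro u hu
      constructor <;> nlinarith [ha.1, ha.2, hb.1, hb.2, hu.1, hu.2]
    have h1 := hη _ (hmem s hs) _ (hmem t ht)
    have h0 := hη _ (hmem 0 ⟨le_refl _, zero_le_one⟩) _ (hmem 1 ⟨zero_le_one, le_refl _⟩)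
    have hab := hη a ha b hb
    simp only [zero_mul, one_mul, add_zero] at h0 h1 ⊢
    rw [h1, h0, show a + s * (b - a) - (a + t * (b - a)) = (s - t) * (b - a) by ring,
      show a - (a + (b - a)) = -(b - a) by ring, abs_mul, abs_neg]
    ring
  · intro t ht
    exact ⟨a + t * (b - a), by constructor <;>
      nlinarith [ha.1, ha.2, hb.1, hb.2, ht.1, ht.2], rfl⟩

theorem stmt0 [MetricSpace M] (hgeo : GeodesicSpace M) (hNE : NE M)
    (γ η : ℝ → M) (hγ : IsGeodesic γ) (hη : IsGeodesic η) (p : M)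
    (hp : γ 0 = p) (hp' : η 0 = p) (horth : Perp γ η) : Perp η γ := by
  set C : Set M := η '' Set.Icc (0:ℝ) 1 with hC
  have hclosed : IsClosed C := (isCompact_Icc.image_of_continuousOn
    (geodesic_continuousOn hη)).isClosed
  have hwc : WeaklyConvex C := geodesic_image_weaklyConvex hη
  have hpC : p ∈ C := ⟨0, ⟨le_refl _, zero_le_one⟩, hp'⟩
  intro t ht s hs
  -- p is a nearest point of γ s on C
  have h1 : NearestPt C (γ s) p := by
    refine ⟨hpC, le_antisymm ?_ (Metric.infDist_le_dist_of_mem hpC)⟩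
    haveI : Nonempty C := ⟨p, hpC⟩
    rw [Metric.infDist_eq_iInf]
    refine le_ciInf ?_
    rintro ⟨z, u, hu, rfl⟩
    rw [dist_comm (γ s) p, dist_comm (γ s) (η u), ← hp]
    exact horth s hs u hu
  have h2 : NearestPt C (η t) (η t) := by
    have hmem : η t ∈ C := ⟨t, ht, rfl⟩
    exact ⟨hmem, by rw [dist_self, Metric.infDist_zero_of_mem hmem]⟩
  have := hNE C hclosed hwc (γ s) (η t) p (η t) h1 h2
  calc dist (η 0) (η t) = dist p (η t) := by rw [hp']
    _ ≤ dist (γ s) (η t) := this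
end

section
/- A geodesic metric space (M,d) satisfies the symmetric orthogonality property (SO) if and only if it satisfies property (A): for every weakly convex set C, every x ∈ M, every y ∈ C, and every nearest point x_C ∈ π_C(x), one has d(x_C, y) ≤ d(x, y). -/
open Set Metric Filter

variable {M : Type*}

theorem stmt1 [MetricSpace M] (hgeo : GeodesicSpace M) :
    SO M ↔
      (∀ C : Set M, WeaklyConvex C → ∀ x : M, ∀ y ∈ C, ∀ xC : M,
        NearestPt C x xC → dist xC y ≤ dist x y) := by
  constructor
  · -- SO → (A)
    intro hSO C hC x y hy xC hxC
    obtain ⟨hxCC, hdist⟩ := hxC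
    obtain ⟨γ, hγ, hγ0, hγ1⟩ := hgeo xC x
    obtain ⟨η, hη, hη0, hη1, hηC⟩ := hC xC hxCC y hy
    have hperp : Perp γ η := by
      intro t ht s hs
      have h1 : dist (γ 0) (γ t) = |0 - t| * dist (γ 0) (γ 1) :=
        hγ 0 ⟨le_refl 0, zero_le_one⟩ t ht
      have h2 : dist (γ 1) (γ t) = |1 - t| * dist (γ 0) (γ 1) :=
        hγ 1 ⟨zero_le_one, le_refl 1⟩ t ht
      have habs1 : |0 - t| = t := by rw [abs_sub_comm]; simpa using abs_of_nonneg ht.1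
      have habs2 : |1 - t| = 1 - t := abs_of_nonneg (by linarith [ht.2])
      have hinf : Metric.infDist x C ≤ dist x (η s) :=
        Metric.infDist_le_dist_of_mem (hηC s hs)
      have htri : dist (η s) (γ 1) ≤ dist (η s) (γ t) + dist (γ t) (γ 1) :=
        dist_triangle _ _ _
      have hx1 : dist x (η s) = dist (η s) (γ 1) := by rw [hγ1, dist_comm]
      have hdd : dist (γ 0) (γ 1) = Metric.infDist x C := by
        rw [hγ0, hγ1, dist_comm]; exact hdist
      have h2' : dist (γ t) (γ 1) = (1 - t) * Metric.infDist x C := by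
        rw [dist_comm, h2, habs2, hdd]
      rw [h1, habs1, hdd]
      nlinarith [Metric.infDist_nonneg (x := x) (s := C), ht.1, ht.2]
    have hperp' : Perp η γ := hSO γ η hγ hη (by rw [hγ0, hη0]) hperp
    have := hperp' 1 ⟨zero_le_one, le_refl 1⟩ 1 ⟨zero_le_one, le_refl 1⟩
    rwa [hη0, hη1, hγ1] at this
  · -- (A) → SO
    intro hA γ η hγ hη h0 hperp
    set C := η '' Set.Icc (0:ℝ) 1 with hCdef
    have hwc : WeaklyConvex C := by
      rintro _ ⟨a, ha, rfl⟩ _ ⟨b, hb, rfl⟩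
      refine ⟨fun t => η ((1 - t) * a + t * b), ?_, by simp, by simp, ?_⟩
      · intro s hs t ht
        have hmem : ∀ u : ℝ, u ∈ Set.Icc (0:ℝ) 1 →
            (1 - u) * a + u * b ∈ Set.Icc (0:ℝ) 1 := by
          intro u hu
          constructor
          · nlinarith [ha.1, hb.1, hu.1, hu.2]
          · nlinarith [ha.2, hb.2, hu.1, hu.2]
        have e1 := hη _ (hmem s hs) _ (hmem t ht)
        have e2 := hη a ha b hb
        simp only [show (1 - (0:ℝ)) * a + 0 * b = a by ring,
          show (1 - (1:ℝ)) * a + 1 * b = b by ring]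
        rw [e1, e2, show (1 - s) * a + s * b - ((1 - t) * a + t * b)
          = (s - t) * (b - a) by ring, abs_mul, abs_sub_comm b a]
        ring
      · intro t ht
        exact ⟨_, by
          constructor
          · nlinarith [ha.1, hb.1, ht.1, ht.2]
          · nlinarith [ha.2, hb.2, ht.1, ht.2], rfl⟩
    intro t ht s hs
    have hyC : η t ∈ C := ⟨t, ht, rfl⟩
    have hCne : C.Nonempty := ⟨η t, hyC⟩
    have hnp : NearestPt C (γ s) (γ 0) := by
      refine ⟨⟨0, ⟨le_refl 0, zero_le_one⟩, h0.symm⟩, le_antisymm ?_ ?_⟩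
      · by_contra h
        push_neg at h
        obtain ⟨_, ⟨a, ha, rfl⟩, hlt⟩ := (Metric.infDist_lt_iff hCne).1 h
        have := hperp s hs a ha
        rw [dist_comm (γ 0) (γ s), dist_comm (η a) (γ s)] at this
        linarith
      · exact Metric.infDist_le_dist_of_mem ⟨0, ⟨le_refl 0, zero_le_one⟩, h0.symm⟩
    have := hA C hwc (γ s) (η t) hyC (γ 0) hnp
    rwa [h0] at this
end

section
/- In a geodesic metric space with the symmetric orthogonality property (SO), if C is weakly convex, x ∈ M, x_C ∈ π_C(x), and γ is a geodesic from x_C to x, then for any geodesic η in C from x_C to a point y ∈ C, one has γ ⟂_{x_C} η, and consequently d(x_C, y) ≤ d(x, y). -/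
open Set Metric Filter

variable {M : Type*}

theorem stmt2 [MetricSpace M] (hgeo : GeodesicSpace M) (hSO : SO M)
    (C : Set M) (hC : WeaklyConvex C) (x xC : M) (hxC : NearestPt C x xC)
    (γ : ℝ → M) (hγ : IsGeodesic γ) (hγ0 : γ 0 = xC) (hγ1 : γ 1 = x)
    (y : M) (hy : y ∈ C)
    (η : ℝ → M) (hη : IsGeodesic η) (hη0 : η 0 = xC) (hη1 : η 1 = y)
    (hηC : ∀ t ∈ Set.Icc (0:ℝ) 1, η t ∈ C) :
    Perp γ η ∧ dist xC y ≤ dist x y := by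
  have hperp : Perp γ η := by
    intro t ht s hs
    have h1 : dist (γ 0) (γ t) = |0 - t| * dist (γ 0) (γ 1) :=
      hγ 0 ⟨le_refl 0, zero_le_one⟩ t ht
    have h2 : dist (γ t) (γ 1) = |t - 1| * dist (γ 0) (γ 1) :=
      hγ t ht 1 ⟨zero_le_one, le_refl 1⟩
    have h3 : dist x xC ≤ dist x (η s) := by
      rw [hxC.2]
      exact Metric.infDist_le_dist_of_mem (hηC s hs)
    have h4 : dist x (η s) ≤ dist x (γ t) + dist (γ t) (η s) := dist_triangle _ _ _
    have habs1 : |0 - t| = t := by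
      rw [abs_sub_comm, sub_zero]; exact abs_of_nonneg ht.1
    have habs2 : |t - 1| = 1 - t := by
      rw [abs_sub_comm]; exact abs_of_nonneg (by linarith [ht.2])
    have hd : dist (γ 0) (γ 1) = dist x xC := by
      rw [hγ0, hγ1, dist_comm]
    rw [habs1, hd] at h1
    rw [habs2, hd, hγ1] at h2
    rw [dist_comm (η s) (γ t)]
    rw [dist_comm x (γ t)] at h4
    have := ht.2
    nlinarith [dist_nonneg (x := x) (y := xC)]
  refine ⟨hperp, ?_⟩
  have hperp' : Perp η γ := hSO γ η hγ hη (by rw [hγ0, hη0]) hperp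
  have := hperp' 1 ⟨zero_le_one, le_refl 1⟩ 1 ⟨zero_le_one, le_refl 1⟩
  rwa [hη0, hη1, hγ1] at this
end

section
/- If (M,d) is a geodesic metric space satisfying the non-expansive projection property (NE), then (M,d) is uniquely geodesic: for any x, y ∈ M there is exactly one [0,1]-parametrized geodesic joining x to y. -/
open Set Metric Filter

variable {M : Type*}

/-!
Let `γ, η` be geodesics from `x` to `y` and `0 ≤ t ≤ 1`. The trace `C` of `γ` is closed and
weakly convex, and `x, y` are their own projections on it, so (NE) forces every projection of
`η t` on `C` to lie within `t·d(x,y)` of `x` and `(1-t)·d(x,y)` of `y`: it is `γ t`.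
Along a geodesic `σ` from `γ t` to `η t` the projection on `C` stays `γ t`, so by (NE) again
`d(x, σ s) ≥ d(x, γ t) = d(x, η t)`. Hence `γ t` and `η t` are both projections of `x` on the
trace of `σ`, and (NE) with `x = y` identifies them.
-/

section MetricSpace

variable [MetricSpace M]

lemma IsGeodesic.dist_zero_left {γ : ℝ → M} (hγ : IsGeodesic γ) {t : ℝ}
    (ht : t ∈ Icc (0:ℝ) 1) :
    dist (γ 0) (γ t) = t * dist (γ 0) (γ 1) := by
  rw [hγ 0 (left_mem_Icc.2 zero_le_one) t ht, zero_sub, abs_neg, abs_of_nonneg ht.1]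

lemma IsGeodesic.dist_one_left {γ : ℝ → M} (hγ : IsGeodesic γ) {t : ℝ}
    (ht : t ∈ Icc (0:ℝ) 1) :
    dist (γ 1) (γ t) = (1 - t) * dist (γ 0) (γ 1) := by
  rw [hγ 1 (right_mem_Icc.2 zero_le_one) t ht, abs_of_nonneg (sub_nonneg.2 ht.2)]

lemma IsGeodesic.lipschitzOnWith {γ : ℝ → M} (hγ : IsGeodesic γ) :
    LipschitzOnWith (Real.toNNReal (dist (γ 0) (γ 1))) γ (Icc 0 1) :=
  LipschitzOnWith.of_dist_le_mul fun s hs t ht => by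
    rw [hγ s hs t ht, Real.coe_toNNReal _ dist_nonneg, Real.dist_eq, mul_comm]

lemma IsGeodesic.isCompact_image {γ : ℝ → M} (hγ : IsGeodesic γ) :
    IsCompact (γ '' Icc 0 1) :=
  isCompact_Icc.image_of_continuousOn hγ.lipschitzOnWith.continuousOn

lemma IsGeodesic.comp_affine {γ : ℝ → M} (hγ : IsGeodesic γ) {a b : ℝ}
    (ha : a ∈ Icc (0:ℝ) 1) (hb : b ∈ Icc (0:ℝ) 1) :
    IsGeodesic fun u => γ (a + u * (b - a)) := by
  have hmem : ∀ u ∈ Icc (0:ℝ) 1, a + u * (b - a) ∈ Icc (0:ℝ) 1 := fun u hu =>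
    (convex_Icc (0:ℝ) 1).add_smul_sub_mem ha hb hu
  intro u hu v hv
  rw [hγ _ (hmem u hu) _ (hmem v hv),
    hγ _ (hmem 0 (left_mem_Icc.2 zero_le_one)) _ (hmem 1 (right_mem_Icc.2 zero_le_one)),
    show a + u * (b - a) - (a + v * (b - a)) = (u - v) * (b - a) by ring,
    show a + 0 * (b - a) - (a + 1 * (b - a)) = -(b - a) by ring, abs_mul, abs_neg, mul_assoc]

lemma IsGeodesic.weaklyConvex_image {γ : ℝ → M} (hγ : IsGeodesic γ) :
    WeaklyConvex (γ '' Icc 0 1) := by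
  rintro _ ⟨a, ha, rfl⟩ _ ⟨b, hb, rfl⟩
  refine ⟨_, hγ.comp_affine ha hb, by simp, by simp, fun u hu => ⟨_, ?_, rfl⟩⟩
  exact (convex_Icc (0:ℝ) 1).add_smul_sub_mem ha hb hu

lemma nearestPt_self {C : Set M} {z : M} (hz : z ∈ C) : NearestPt C z z :=
  ⟨hz, by rw [dist_self, infDist_zero_of_mem hz]⟩

lemma nearestPt_of_forall_dist_le {C : Set M} {x p : M} (hp : p ∈ C)
    (h : ∀ q ∈ C, dist x p ≤ dist x q) : NearestPt C x p :=
  ⟨hp, le_antisymm ((le_infDist ⟨p, hp⟩).2 h) (infDist_le_dist_of_mem hp)⟩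

lemma NearestPt.of_dist_eq {C : Set M} {x p q : M} (hp : NearestPt C x p) (hq : q ∈ C)
    (h : dist x q = dist x p) : NearestPt C x q :=
  ⟨hq, h.trans hp.2⟩

lemma IsCompact.exists_nearestPt {C : Set M} (hC : IsCompact C) (hne : C.Nonempty) (x : M) :
    ∃ p, NearestPt C x p := by
  obtain ⟨p, hp, hd⟩ := hC.exists_infDist_eq_dist hne x
  exact ⟨p, hp, hd.symm⟩

/-- The triangle inequality `infDist z C ≤ d(z, σ s) + infDist (σ s) C` leaves no room for
a point of `C` closer to `σ s` than `p`. -/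
lemma NearestPt.of_isGeodesic {C : Set M} {z p : M} (hp : NearestPt C z p)
    {σ : ℝ → M} (hσ : IsGeodesic σ) (hσ0 : σ 0 = p) (hσ1 : σ 1 = z)
    {s : ℝ} (hs : s ∈ Icc (0:ℝ) 1) : NearestPt C (σ s) p := by
  refine ⟨hp.1, le_antisymm ?_ (infDist_le_dist_of_mem hp.1)⟩
  have htri := infDist_le_infDist_add_dist (x := z) (y := σ s) (s := C)
  have h0 := hσ.dist_zero_left hs
  have h1 := hσ.dist_one_left hs
  rw [hσ0, hσ1] at h0 h1
  rw [← hp.2, h1, dist_comm] at htri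
  rw [dist_comm, h0]
  linarith

lemma NE.eq_of_nearestPt (hNE : NE M) {C : Set M} (hC : IsClosed C) (hwc : WeaklyConvex C)
    {x p q : M} (hp : NearestPt C x p) (hq : NearestPt C x q) : p = q :=
  dist_le_zero.1 ((hNE C hC hwc x x p q hp hq).trans_eq (dist_self x))

/-- Comparing with the endpoints, which are their own projections, pins the projection of
`η t` to the parameter `t`. -/
lemma NE.nearestPt_image_eq (hNE : NE M) {γ η : ℝ → M}
    (hγ : IsGeodesic γ) (hη : IsGeodesic η) (h0 : η 0 = γ 0) (h1 : η 1 = γ 1)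
    {t : ℝ} (ht : t ∈ Icc (0:ℝ) 1) {p : M} (hp : NearestPt (γ '' Icc 0 1) (η t) p) :
    p = γ t := by
  have hC := hγ.isCompact_image.isClosed
  have hwc := hγ.weaklyConvex_image
  have hx := hNE _ hC hwc _ _ _ _ (nearestPt_self ⟨0, left_mem_Icc.2 zero_le_one, rfl⟩) hp
  have hy := hNE _ hC hwc _ _ _ _ (nearestPt_self ⟨1, right_mem_Icc.2 zero_le_one, rfl⟩) hp
  obtain ⟨u, hu, rfl⟩ := hp.1
  have hηx := hη.dist_zero_left ht
  have hηy := hη.dist_one_left ht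
  rw [h0, h1] at hηx hηy
  rw [hγ.dist_zero_left hu, hηx] at hx
  rw [hγ.dist_one_left hu, hηy] at hy
  have hut : (u - t) * dist (γ 0) (γ 1) = 0 := by linarith
  rw [← dist_eq_zero, hγ u hu t ht, ← abs_of_nonneg (dist_nonneg (x := γ 0) (y := γ 1)),
    ← abs_mul, hut, abs_zero]

end MetricSpace

theorem stmt4 [MetricSpace M] (hgeo : GeodesicSpace M) (hNE : NE M) :
    ∀ x y : M,
      (∃ γ : ℝ → M, IsGeodesic γ ∧ γ 0 = x ∧ γ 1 = y) ∧
      (∀ γ η : ℝ → M, IsGeodesic γ → IsGeodesic η →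
        γ 0 = x → γ 1 = y → η 0 = x → η 1 = y →
        ∀ t ∈ Set.Icc (0:ℝ) 1, γ t = η t) := by
  intro x y
  refine ⟨hgeo x y, fun γ η hγ hη hγ0 hγ1 hη0 hη1 t ht => ?_⟩
  subst hγ0 hγ1
  have hγx : γ 0 ∈ γ '' Icc 0 1 := ⟨0, left_mem_Icc.2 zero_le_one, rfl⟩
  obtain ⟨p, hp⟩ := hγ.isCompact_image.exists_nearestPt ⟨_, hγx⟩ (η t)
  obtain rfl : p = γ t :=
    hNE.nearestPt_image_eq hγ hη hη0 hη1 ht hp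
  obtain ⟨σ, hσ, hσ0, hσ1⟩ := hgeo (γ t) (η t)
  have hσγ : NearestPt (σ '' Icc 0 1) (γ 0) (γ t) :=
    nearestPt_of_forall_dist_le ⟨0, left_mem_Icc.2 zero_le_one, hσ0⟩ fun _ ⟨s, hs, hq⟩ =>
      hq ▸ hNE _ hγ.isCompact_image.isClosed hγ.weaklyConvex_image _ _ _ _
        (nearestPt_self hγx) (hp.of_isGeodesic hσ hσ0 hσ1 hs)
  have hση : NearestPt (σ '' Icc 0 1) (γ 0) (η t) := by
    refine hσγ.of_dist_eq ⟨1, right_mem_Icc.2 zero_le_one, hσ1⟩ ?_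
    rw [hγ.dist_zero_left ht, ← hη0, ← hη1, hη.dist_zero_left ht]
  exact hNE.eq_of_nearestPt hσ.isCompact_image.isClosed hσ.weaklyConvex_image hσγ hση
end

section
/- In a uniformly ∞-convex complete geodesic metric space, the nearest point projection onto any nonempty closed convex set is at most single-valued. -/
open Set Metric Filter

variable {M : Type*}

def UnifInfConvexWith (ρ : ℝ → ℝ) (M : Type*) [MetricSpace M] : Prop :=
  (∀ ε > (0:ℝ), ρ ε > 0) ∧
  ∀ ε > (0:ℝ), ∀ x y z m : M,
    dist y z > ε * max (dist x y) (dist x z) →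
    dist y m = dist y z / 2 → dist z m = dist y z / 2 →
    dist x m ≤ (1 - ρ ε) * max (dist x y) (dist x z)

lemma IsGeodesic.dist_zero_half [MetricSpace M] {γ : ℝ → M} (hγ : IsGeodesic γ) :
    dist (γ 0) (γ (1 / 2)) = dist (γ 0) (γ 1) / 2 := by
  rw [hγ 0 (by norm_num) (1 / 2) (by norm_num)]
  norm_num [abs_of_neg]
  ring

lemma IsGeodesic.dist_one_half [MetricSpace M] {γ : ℝ → M} (hγ : IsGeodesic γ) :
    dist (γ 1) (γ (1 / 2)) = dist (γ 0) (γ 1) / 2 := by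
  rw [hγ 1 (by norm_num) (1 / 2) (by norm_num)]
  norm_num
  ring

lemma GeoConvex.exists_midpoint_mem [MetricSpace M] (hgeo : GeodesicSpace M) {C : Set M}
    (hC : GeoConvex C) {y z : M} (hy : y ∈ C) (hz : z ∈ C) :
    ∃ m ∈ C, dist y m = dist y z / 2 ∧ dist z m = dist y z / 2 := by
  obtain ⟨γ, hγ, rfl, rfl⟩ := hgeo y z
  exact ⟨γ (1 / 2), hC γ hγ hy hz _ (by norm_num), hγ.dist_zero_half, hγ.dist_one_half⟩

lemma UnifInfConvexWith.dist_lt_max_of_midpoint [MetricSpace M] {ρ : ℝ → ℝ}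
    (hρ : UnifInfConvexWith ρ M) {x y z m : M} (hyz : y ≠ z)
    (hym : dist y m = dist y z / 2) (hzm : dist z m = dist y z / 2) :
    dist x m < max (dist x y) (dist x z) := by
  set R := max (dist x y) (dist x z)
  have hyz_pos : 0 < dist y z := dist_pos.mpr hyz
  have hR_pos : 0 < R := by
    by_contra! hR
    have hxy : dist x y = 0 := le_antisymm ((le_max_left _ _).trans hR) dist_nonneg
    have hxz : dist x z = 0 := le_antisymm ((le_max_right _ _).trans hR) dist_nonneg
    exact hyz ((dist_eq_zero.mp hxy).symm.trans (dist_eq_zero.mp hxz))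
  -- Any `ε` below `dist y z / R` is admissible; we take half of it.
  set ε := dist y z / (2 * R)
  have hε : 0 < ε := by positivity
  have hsep : dist y z > ε * R := by
    have : ε * R = dist y z / 2 := by simp only [ε]; field_simp
    linarith
  have hρε := hρ.1 ε hε
  nlinarith [hρ.2 ε hε x y z m hsep hym hzm]

theorem stmt9_general [MetricSpace M] (hgeo : GeodesicSpace M)
    (ρ : ℝ → ℝ) (hρ : UnifInfConvexWith ρ M)
    (C : Set M) (hCconv : GeoConvex C)
    (x y z : M) (hy : NearestPt C x y) (hz : NearestPt C x z) : y = z := by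
  by_contra hyz
  obtain ⟨hyC, hxy⟩ := hy
  obtain ⟨hzC, hxz⟩ := hz
  obtain ⟨m, hmC, hym, hzm⟩ := hCconv.exists_midpoint_mem hgeo hyC hzC
  have hlt := hρ.dist_lt_max_of_midpoint (x := x) hyz hym hzm
  rw [hxy, hxz, max_self] at hlt
  exact (Metric.infDist_le_dist_of_mem hmC).not_gt hlt

theorem stmt9 [MetricSpace M] [CompleteSpace M] (hgeo : GeodesicSpace M)
    (ρ : ℝ → ℝ) (hρ : UnifInfConvexWith ρ M)
    (C : Set M) (hCne : C.Nonempty) (hCc : IsClosed C) (hCconv : GeoConvex C)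
    (x y z : M) (hy : NearestPt C x y) (hz : NearestPt C x z) : y = z :=
  stmt9_general hgeo ρ hρ C hCconv x y z hy hz
end

section
/- Let (M,d) be Busemann convex, γ: ℝ → M a geodesic line and η: [0,∞) → M a geodesic ray with γ_0 = η_0. Suppose the convex hulls of γ([0,∞)) ∪ η([0,∞)) and of γ((−∞,0]) ∪ η([0,∞)) are each isometric to flat Euclidean sectors. Then for all s_− < 0 < s_+ and t ≥ 0, with λ ∈ (0,1) defined by (1−λ)s_− + λ s_+ = 0: d(η_t, γ_0)² ≤ (1−λ) d(η_t, γ_{s_−})² + λ d(η_t, γ_{s_+})² − (1−λ)λ d(γ_{s_−}, γ_{s_+})². -/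
/-!
Each flat sector turns the two rays bounding it into rays of the Euclidean plane, and rays of an
inner product space from a common origin satisfy the law of cosines
`d(α s, β u)² = s² + u² - 2 s u c`. Let `c₋`, `c₊` be the cosines of the angles that `η` makes with
the two halves of `γ`. The triangle inequality `2 = d(γ₋₁, γ₁) ≤ d(γ₋₁, η_u) + d(η_u, γ₁)`, read
to first order in `u`, gives `c₋ + c₊ ≤ 0`: the two angles add up to at least `π`. By the law of
cosines and `(1 - λ) s₋ + λ s₊ = 0`, the right-hand side of the claim equals
`t² - 2 t λ s₊ (c₋ + c₊) ≥ t² = d(η_t, γ₀)²`.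
-/

open Set Metric Filter

variable {M : Type*}

def geoClosedConvexHull [MetricSpace M] (A : Set M) : Set M :=
  ⋂₀ {C : Set M | GeoConvex C ∧ IsClosed C ∧ A ⊆ C}

def IsGeodesicRay {X : Type*} [PseudoMetricSpace X] (α : ℝ → X) : Prop :=
  ∀ s ∈ Ici (0 : ℝ), ∀ t ∈ Ici (0 : ℝ), dist (α s) (α t) = |s - t|

namespace IsGeodesicRay

section InnerProductSpace

variable {E : Type*} [NormedAddCommGroup E] [InnerProductSpace ℝ E]

theorem eq_add_smul {f : ℝ → E} (hf : IsGeodesicRay f) {s : ℝ} (hs : 0 ≤ s) :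
    f s = f 0 + s • (f 1 - f 0) := by
  have h0 : (0 : ℝ) ∈ Ici 0 := self_mem_Ici
  have h1 : (1 : ℝ) ∈ Ici 0 := mem_Ici.2 zero_le_one
  have hns : ‖f s - f 0‖ = s := by rw [← dist_eq_norm, hf s hs 0 h0, sub_zero, abs_of_nonneg hs]
  have hn1 : ‖f 1 - f 0‖ = 1 := by rw [← dist_eq_norm, hf 1 h1 0 h0]; norm_num
  have hn : ‖(f s - f 0) - (f 1 - f 0)‖ = |s - 1| := by
    rw [sub_sub_sub_cancel_right, ← dist_eq_norm, hf s hs 1 h1]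
  -- polarization identity: `⟪f s - f 0, f 1 - f 0⟫ = s`
  have hinner := norm_sub_sq_real (f s - f 0) (f 1 - f 0)
  rw [hns, hn1, hn, sq_abs] at hinner
  have hzero : ‖(f s - f 0) - s • (f 1 - f 0)‖ ^ 2 = 0 := by
    rw [norm_sub_sq_real, real_inner_smul_right, norm_smul, hns, hn1, Real.norm_eq_abs, mul_one,
      sq_abs]
    linear_combination -s * hinner
  rwa [sq_eq_zero_iff, norm_eq_zero, sub_sub, sub_eq_zero] at hzero

theorem exists_sq_dist_eq {f g : ℝ → E} (hf : IsGeodesicRay f) (hg : IsGeodesicRay g)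
    (h0 : f 0 = g 0) :
    ∃ c : ℝ, ∀ s ≥ 0, ∀ u ≥ 0, dist (f s) (g u) ^ 2 = s ^ 2 + u ^ 2 - 2 * s * u * c := by
  have hnorm {h : ℝ → E} (hh : IsGeodesicRay h) : ‖h 1 - h 0‖ = 1 := by
    rw [← dist_eq_norm, hh 1 (mem_Ici.2 zero_le_one) 0 self_mem_Ici]; norm_num
  refine ⟨inner ℝ (f 1 - f 0) (g 1 - g 0), fun s hs u hu => ?_⟩
  have hdiff : f s - g u = s • (f 1 - f 0) - u • (g 1 - g 0) := by
    rw [hf.eq_add_smul hs, hg.eq_add_smul hu, h0]; abel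
  rw [dist_eq_norm, hdiff, norm_sub_sq_real, norm_smul, norm_smul, hnorm hf, hnorm hg,
    real_inner_smul_left, real_inner_smul_right, Real.norm_eq_abs, Real.norm_eq_abs, mul_one,
    mul_one, sq_abs, sq_abs]
  ring

end InnerProductSpace

variable {X : Type*} [PseudoMetricSpace X]

theorem comp_of_dist_eq {Y : Type*} [PseudoMetricSpace Y] {A : Set X} {φ : X → Y}
    (hφ : ∀ x ∈ A, ∀ y ∈ A, dist (φ x) (φ y) = dist x y) {α : ℝ → X} (hα : IsGeodesicRay α)
    (hαA : ∀ s ≥ 0, α s ∈ A) : IsGeodesicRay (φ ∘ α) := fun s hs t ht => by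
  rw [Function.comp_apply, Function.comp_apply, hφ _ (hαA s hs) _ (hαA t ht), hα s hs t ht]

theorem exists_sq_dist_eq_of_isometryEquiv {E : Type*} [NormedAddCommGroup E]
    [InnerProductSpace ℝ E] {A : Set X} {S : Set E} (e : A ≃ᵢ S) {α β : ℝ → X}
    (hα : IsGeodesicRay α) (hβ : IsGeodesicRay β) (h0 : α 0 = β 0)
    (hαA : ∀ s ≥ 0, α s ∈ A) (hβA : ∀ s ≥ 0, β s ∈ A) :
    ∃ c : ℝ, ∀ s ≥ 0, ∀ u ≥ 0, dist (α s) (β u) ^ 2 = s ^ 2 + u ^ 2 - 2 * s * u * c := by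
  classical
  let φ : X → E := fun x => if hx : x ∈ A then (e ⟨x, hx⟩ : E) else 0
  have hφ : ∀ x ∈ A, ∀ y ∈ A, dist (φ x) (φ y) = dist x y := fun x hx y hy => by
    simp only [φ, dif_pos hx, dif_pos hy]
    rw [← Subtype.dist_eq, e.dist_eq, Subtype.dist_eq]
  obtain ⟨c, hc⟩ := exists_sq_dist_eq (hα.comp_of_dist_eq hφ hαA)
    (hβ.comp_of_dist_eq hφ hβA) (by rw [Function.comp_apply, Function.comp_apply, h0])
  refine ⟨c, fun s hs u hu => ?_⟩
  rw [← hc s hs u hu, Function.comp_apply, Function.comp_apply, hφ _ (hαA s hs) _ (hβA u hu)]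

end IsGeodesicRay

theorem subset_geoClosedConvexHull {X : Type*} [MetricSpace X] (A : Set X) :
    A ⊆ geoClosedConvexHull A := by
  unfold geoClosedConvexHull
  exact subset_sInter fun _ hC => hC.2.2

theorem add_nonpos_of_sq_dist_eq {X : Type*} [PseudoMetricSpace X] {x y : X} {p : ℝ → X}
    {c c' : ℝ} (hxy : 2 ≤ dist x y) (hx : ∀ u > 0, dist x (p u) ^ 2 = 1 + u ^ 2 - 2 * u * c)
    (hy : ∀ u > 0, dist (p u) y ^ 2 = 1 + u ^ 2 - 2 * u * c') : c + c' ≤ 0 := by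
  refine le_of_forall_pos_le_add fun u hu => ?_
  -- `d ≤ (1 + d²) / 2` bounds both distances to first order in `u`
  have hamgm (d : ℝ) : d ≤ (1 + d ^ 2) / 2 := by nlinarith [sq_nonneg (d - 1)]
  have htri : dist x y ≤ dist x (p u) + dist (p u) y := dist_triangle _ _ _
  have hx' := hamgm (dist x (p u))
  have hy' := hamgm (dist (p u) y)
  rw [hx u hu] at hx'
  rw [hy u hu] at hy'
  nlinarith

theorem stmt12_general [MetricSpace M]
    (γ : ℝ → M) (hγ : ∀ s t : ℝ, dist (γ s) (γ t) = |s - t|)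
    (η : ℝ → M) (hη : ∀ s ∈ Set.Ici (0:ℝ), ∀ t ∈ Set.Ici (0:ℝ),
      dist (η s) (η t) = |s - t|)
    (h0 : γ 0 = η 0)
    (hflatP : ∃ S : Set (EuclideanSpace ℝ (Fin 2)), Convex ℝ S ∧
      Nonempty (↥(geoClosedConvexHull (γ '' Set.Ici 0 ∪ η '' Set.Ici 0)) ≃ᵢ ↥S))
    (hflatN : ∃ S : Set (EuclideanSpace ℝ (Fin 2)), Convex ℝ S ∧
      Nonempty (↥(geoClosedConvexHull (γ '' Set.Iic 0 ∪ η '' Set.Ici 0)) ≃ᵢ ↥S)) :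
    ∀ sm sp t lam : ℝ, sm < 0 → 0 < sp → 0 ≤ t → lam ∈ Set.Ioo (0:ℝ) 1 →
      (1 - lam) * sm + lam * sp = 0 →
      dist (η t) (γ 0) ^ 2 ≤
        (1 - lam) * dist (η t) (γ sm) ^ 2 + lam * dist (η t) (γ sp) ^ 2
          - (1 - lam) * lam * dist (γ sm) (γ sp) ^ 2 := by
  intro sm sp t lam hsm hsp ht hlam hcomb
  have hγP : IsGeodesicRay γ := fun s _ t _ => hγ s t
  have hγN : IsGeodesicRay (fun s => γ (-s)) := fun s _ t _ => by
    rw [hγ, ← abs_neg]; ring_nf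
  obtain ⟨SP, -, ⟨eP⟩⟩ := hflatP
  obtain ⟨SN, -, ⟨eN⟩⟩ := hflatN
  obtain ⟨cp, hcp⟩ := hγP.exists_sq_dist_eq_of_isometryEquiv eP hη h0
    (fun s hs => subset_geoClosedConvexHull _ (.inl ⟨s, hs, rfl⟩))
    (fun s hs => subset_geoClosedConvexHull _ (.inr ⟨s, hs, rfl⟩))
  obtain ⟨cm, hcm⟩ := hγN.exists_sq_dist_eq_of_isometryEquiv eN hη (by simpa using h0)
    (fun s hs => subset_geoClosedConvexHull _ (.inl ⟨-s, neg_nonpos.mpr hs, rfl⟩))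
    (fun s hs => subset_geoClosedConvexHull _ (.inr ⟨s, hs, rfl⟩))
  have hangle : cm + cp ≤ 0 :=
    add_nonpos_of_sq_dist_eq (x := γ (-1)) (y := γ 1) (p := η) (by rw [hγ]; norm_num)
      (fun u hu => by simpa using hcm 1 zero_le_one u hu.le)
      (fun u hu => by simpa [dist_comm] using hcp 1 zero_le_one u hu.le)
  have hm := hcm (-sm) (by linarith) t ht
  rw [neg_neg] at hm
  rw [h0, hη t ht 0 self_mem_Ici, hγ, dist_comm (η t) (γ sm), dist_comm (η t) (γ sp), hm,
    hcp sp hsp.le t ht, sq_abs, sq_abs, sub_zero]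
  have hvariance : (1 - lam) * ((-sm) ^ 2 + t ^ 2 - 2 * -sm * t * cm)
      + lam * (sp ^ 2 + t ^ 2 - 2 * sp * t * cp) - (1 - lam) * lam * (sm - sp) ^ 2
      = t ^ 2 - 2 * t * (lam * sp) * (cm + cp) := by
    linear_combination ((1 - lam) * sm + lam * sp + 2 * t * cm) * hcomb
  rw [hvariance]
  linarith [mul_nonneg (mul_nonneg ht (mul_nonneg hlam.1.le hsp.le)) (neg_nonneg.mpr hangle)]

theorem stmt12 [MetricSpace M] [CompleteSpace M] (hgeo : GeodesicSpace M)
    (hB : BusemannConvex M)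
    (γ : ℝ → M) (hγ : ∀ s t : ℝ, dist (γ s) (γ t) = |s - t|)
    (η : ℝ → M) (hη : ∀ s ∈ Set.Ici (0:ℝ), ∀ t ∈ Set.Ici (0:ℝ),
      dist (η s) (η t) = |s - t|)
    (h0 : γ 0 = η 0)
    (hflatP : ∃ S : Set (EuclideanSpace ℝ (Fin 2)), Convex ℝ S ∧
      Nonempty (↥(geoClosedConvexHull (γ '' Set.Ici 0 ∪ η '' Set.Ici 0)) ≃ᵢ ↥S))
    (hflatN : ∃ S : Set (EuclideanSpace ℝ (Fin 2)), Convex ℝ S ∧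
      Nonempty (↥(geoClosedConvexHull (γ '' Set.Iic 0 ∪ η '' Set.Ici 0)) ≃ᵢ ↥S)) :
    ∀ sm sp t lam : ℝ, sm < 0 → 0 < sp → 0 ≤ t → lam ∈ Set.Ioo (0:ℝ) 1 →
      (1 - lam) * sm + lam * sp = 0 →
      dist (η t) (γ 0) ^ 2 ≤
        (1 - lam) * dist (η t) (γ sm) ^ 2 + lam * dist (η t) (γ sp) ^ 2
          - (1 - lam) * lam * dist (γ sm) (γ sp) ^ 2 :=
  stmt12_general γ hγ η hη h0 hflatP hflatN
end

section
/- Let (M,d) be Busemann convex and let γ, η be geodesics starting at the same point x. Then the limit lim_{λ→0⁺} d(γ_{λs}, η_{λs'})/λ exists for all s, s' ≥ 0 (the function λ ↦ d(γ_{λs}, η_{λs'})/λ is monotone non-decreasing in λ). -/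
open Set Metric Filter

variable {M : Type*}

lemma geo_scale [MetricSpace M] {γ : ℝ → M} (hγ : IsGeodesic γ) {a : ℝ}
    (ha : 0 ≤ a) (ha1 : a ≤ 1) : IsGeodesic (fun t => γ (t * a)) := by
  intro u hu v hv
  have h1 : u * a ∈ Set.Icc (0:ℝ) 1 := ⟨mul_nonneg hu.1 ha, by nlinarith [hu.1, hu.2]⟩
  have h2 : v * a ∈ Set.Icc (0:ℝ) 1 := ⟨mul_nonneg hv.1 ha, by nlinarith [hv.1, hv.2]⟩
  have ha' : (0:ℝ) ∈ Set.Icc (0:ℝ) 1 := ⟨le_rfl, zero_le_one⟩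
  have haa : a ∈ Set.Icc (0:ℝ) 1 := ⟨ha, ha1⟩
  simp only
  rw [hγ _ h1 _ h2]
  have : dist (γ (0 * a)) (γ (1 * a)) = dist (γ 0) (γ a) := by norm_num
  rw [this, hγ 0 ha' a haa]
  have : |u * a - v * a| = |u - v| * a := by
    rw [← sub_mul, abs_mul, abs_of_nonneg ha]
  rw [this, show |0 - a| = a by rw [zero_sub, abs_neg, abs_of_nonneg ha]]
  ring

lemma key_ineq [MetricSpace M] (hB : BusemannConvex M)
    (γ η : ℝ → M) (hγ : IsGeodesic γ) (hη : IsGeodesic η) (h0 : γ 0 = η 0)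
    {a b t : ℝ} (ha : 0 ≤ a) (ha1 : a ≤ 1) (hb : 0 ≤ b) (hb1 : b ≤ 1)
    (ht : 0 ≤ t) (ht1 : t ≤ 1) :
    dist (γ (t * a)) (η (t * b)) ≤ t * dist (γ a) (η b) := by
  have cg := hB _ _ (geo_scale hγ ha ha1) (geo_scale hη hb hb1)
  have h00 : dist (γ (0 * a)) (η (0 * b)) = 0 := by
    norm_num [h0]
  have := cg.2 (Set.mem_Icc.2 ⟨le_rfl, zero_le_one⟩ : (0:ℝ) ∈ Set.Icc (0:ℝ) 1)
    (Set.mem_Icc.2 ⟨zero_le_one, le_rfl⟩ : (1:ℝ) ∈ Set.Icc (0:ℝ) 1)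
    (show (0:ℝ) ≤ 1 - t by linarith) ht (by ring)
  simp only [smul_eq_mul] at this
  have heq : (1 - t) * 0 + t * 1 = t := by ring
  rw [heq] at this
  calc dist (γ (t * a)) (η (t * b)) ≤ (1 - t) * dist (γ (0 * a)) (η (0 * b))
        + t * dist (γ (1 * a)) (η (1 * b)) := this
    _ = t * dist (γ a) (η b) := by rw [h00]; norm_num

theorem stmt15 [MetricSpace M] [CompleteSpace M] (hgeo : GeodesicSpace M)
    (hB : BusemannConvex M)
    (γ η : ℝ → M) (hγ : IsGeodesic γ) (hη : IsGeodesic η) (h0 : γ 0 = η 0)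
    (s s' : ℝ) (hs : 0 ≤ s) (hs' : 0 ≤ s') :
    MonotoneOn (fun lam => dist (γ (lam * s)) (η (lam * s')) / lam)
      {lam : ℝ | 0 < lam ∧ lam * s ≤ 1 ∧ lam * s' ≤ 1} ∧
    ∃ L : ℝ, Filter.Tendsto (fun lam => dist (γ (lam * s)) (η (lam * s')) / lam)
      (nhdsWithin 0 (Set.Ioi 0)) (nhds L) := by
  set f : ℝ → ℝ := fun lam => dist (γ (lam * s)) (η (lam * s')) / lam with hf
  have hmono : MonotoneOn f {lam : ℝ | 0 < lam ∧ lam * s ≤ 1 ∧ lam * s' ≤ 1} := by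
    rintro l₁ ⟨h1p, h1s, h1s'⟩ l₂ ⟨h2p, h2s, h2s'⟩ hle
    have ht1 : l₁ / l₂ ≤ 1 := (div_le_one h2p).2 hle
    have ht0 : 0 ≤ l₁ / l₂ := le_of_lt (div_pos h1p h2p)
    have key := key_ineq hB γ η hγ hη h0 (mul_nonneg h2p.le hs) h2s
      (mul_nonneg h2p.le hs') h2s' ht0 ht1
    have e1 : l₁ / l₂ * (l₂ * s) = l₁ * s := by field_simp <;> ring
    have e2 : l₁ / l₂ * (l₂ * s') = l₁ * s' := by field_simp <;> ring
    rw [e1, e2] at key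
    simp only [hf]
    rw [div_le_div_iff₀ h1p h2p]
    have : l₁ / l₂ * dist (γ (l₂ * s)) (η (l₂ * s')) * l₂
        = l₁ * dist (γ (l₂ * s)) (η (l₂ * s')) := by field_simp <;> ring
    nlinarith [dist_nonneg (x := γ (l₂ * s)) (y := η (l₂ * s')), key]
  refine ⟨hmono, ?_⟩
  set ε : ℝ := (1 + s + s')⁻¹ with hε
  have hden : (0:ℝ) < 1 + s + s' := by linarith
  have hεpos : 0 < ε := inv_pos.2 hden
  have hsub : Set.Ioo (0:ℝ) ε ⊆ {lam : ℝ | 0 < lam ∧ lam * s ≤ 1 ∧ lam * s' ≤ 1} := by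
    rintro l ⟨hl0, hlε⟩
    have h1 : l * (1 + s + s') < 1 := by
      have := (lt_div_iff₀ hden).1 (by rwa [hε, inv_eq_one_div] at hlε)
      linarith
    exact ⟨hl0, by nlinarith, by nlinarith⟩
  have hne : (Set.Ioo (0:ℝ) ε).Nonempty := ⟨ε / 2, half_pos hεpos, half_lt_self hεpos⟩
  have hbdd : BddBelow (f '' Set.Ioo (0:ℝ) ε) := by
    refine ⟨0, ?_⟩
    rintro y ⟨l, ⟨hl0, _⟩, rfl⟩
    exact div_nonneg dist_nonneg hl0.le
  exact ⟨_, MonotoneOn.tendsto_nhdsWithin_Ioo_right hne (hmono.mono hsub) hbdd⟩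
end

section
/- In a strictly p-convex geodesic space (p > 1) satisfying the stable symmetric orthogonality property (SO*), for all unit-speed geodesics γ, η issuing from the same point, the one-sided derivatives satisfy: lim_{t→0⁺} (d²(η_t, γ_1) − d²(η_0, γ_1))/t = lim_{s→0⁺} (d²(η_1, γ_s) − d²(η_1, γ_0))/s. -/
/-!
Lift `γ` and `η` to the geodesics `s ↦ (γ s, β s)` and `t ↦ (η t, α t)` of `M ×₂ ℝ`. The lift of
`γ` is perpendicular to that of `η` exactly when `2αβ t - α² t² ≤ d²(η t, γ 1) - d²(η 0, γ 1)` on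
`[0, 1]`. Given `m` below the right derivative `L₁` of the right-hand side, this holds for `α`
large and `β = m / 2α`; symmetry of `⟂` in `M ×₂ ℝ` then yields the mirrored bound
`m s - β² s² ≤ d²(γ s, η 1) - d²(γ 0, η 1)`, so the other derivative `L₂` is at least `m`. Hence
`L₁ ≤ L₂`, and exchanging `γ` and `η` gives equality.

The derivatives exist because `t ↦ d(q, γ t)^p` is convex with slopes at `0` bounded below (the
tangent line of `x ↦ x^p`), and `d² = (d^p)^(2/p)` with `d^p > 0` at `t = 0` unless `q = γ 0`.
-/

open Set Metric Filter

variable {M : Type*}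

open Topology

lemma hasDerivWithinAt_Ioi_zero_iff {f : ℝ → ℝ} {L : ℝ} :
    HasDerivWithinAt f L (Ioi 0) 0 ↔ Tendsto (fun t => (f t - f 0) / t) (𝓝[>] 0) (𝓝 L) := by
  rw [hasDerivWithinAt_iff_tendsto_slope' (by simp), slope_fun_def_field]
  simp only [sub_zero]

lemma ConvexOn.exists_hasDerivWithinAt_Ioi {f : ℝ → ℝ} {a b C : ℝ} (hab : a < b)
    (hf : ConvexOn ℝ (Icc a b) f) (hC : ∀ t ∈ Ioo a b, C ≤ slope f a t) :
    ∃ L, HasDerivWithinAt f L (Ioi a) a := by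
  have hmono : MonotoneOn (slope f a) (Ioo a b) :=
    (hf.slope_mono (left_mem_Icc.2 hab.le)).mono fun t ht => ⟨Ioo_subset_Icc_self ht, ht.1.ne'⟩
  have hbdd : BddBelow (slope f a '' Ioo a b) := ⟨C, by rintro _ ⟨t, ht, rfl⟩; exact hC t ht⟩
  exact ⟨_, (hasDerivWithinAt_iff_tendsto_slope' (lt_irrefl a)).2
    (hmono.tendsto_nhdsWithin_Ioo_right (nonempty_Ioo.2 hab) hbdd)⟩

lemma Real.rpow_add_mul_sub_le_rpow {p x y : ℝ} (hp : 1 ≤ p) (hx : 0 < x) (hy : 0 ≤ y) :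
    x ^ p + p * x ^ (p - 1) * (y - x) ≤ y ^ p := by
  have hs : -1 ≤ y / x - 1 := by have := div_nonneg hy hx.le; linarith
  have hb := one_add_mul_self_le_rpow_one_add hs hp
  rw [add_sub_cancel, Real.div_rpow hy hx.le, le_div_iff₀ (Real.rpow_pos_of_pos hx p)] at hb
  calc x ^ p + p * x ^ (p - 1) * (y - x) = (1 + p * (y / x - 1)) * x ^ p := by
        rw [Real.rpow_sub_one hx.ne']; field_simp
    _ ≤ y ^ p := hb

lemma exists_quadratic_lower_bound_of_lt {f : ℝ → ℝ} {L m B : ℝ}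
    (hf : HasDerivWithinAt f L (Ioi 0) 0) (hB : ∀ t ∈ Icc (0:ℝ) 1, B ≤ f t) (hm : m < L) :
    ∃ K > 0, ∀ t ∈ Icc (0:ℝ) 1, m * t - K * t ^ 2 ≤ f t - f 0 := by
  have hev : ∀ᶠ t in 𝓝[>] 0, m < (f t - f 0) / t :=
    (hasDerivWithinAt_Ioi_zero_iff.1 hf).eventually (lt_mem_nhds hm)
  obtain ⟨u, hu, hsub⟩ := mem_nhdsGT_iff_exists_Ioc_subset.1 hev
  set δ := min u 1
  have hδ : 0 < δ := lt_min hu one_pos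
  have hgap : 0 < |m| + f 0 - B + 1 := by
    linarith [abs_nonneg m, hB 0 (left_mem_Icc.2 zero_le_one)]
  refine ⟨(|m| + f 0 - B + 1) / δ ^ 2, by positivity, fun t ht => ?_⟩
  have hK : 0 ≤ (|m| + f 0 - B + 1) / δ ^ 2 * t ^ 2 := by positivity
  rcases ht.1.eq_or_lt with rfl | ht0
  · simp
  rcases le_or_gt t δ with htδ | htδ
  · have := (lt_div_iff₀ ht0).1 (hsub ⟨ht0, htδ.trans (min_le_left _ _)⟩)
    linarith
  · have hsq : δ ^ 2 ≤ t ^ 2 := pow_le_pow_left₀ hδ.le htδ.le 2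
    have hKt : |m| + f 0 - B + 1 ≤ (|m| + f 0 - B + 1) / δ ^ 2 * t ^ 2 := by
      rw [div_mul_eq_mul_div, le_div_iff₀ (by positivity)]
      exact mul_le_mul_of_nonneg_left hsq hgap.le
    have hmt : m * t ≤ |m| := by
      nlinarith [le_abs_self m, abs_nonneg m, ht.2]
    linarith [hB t ht]

lemma le_of_hasDerivWithinAt_of_quadratic_lower_bound {g : ℝ → ℝ} {L a b : ℝ}
    (hg : HasDerivWithinAt g L (Ioi 0) 0)
    (h : ∀ s ∈ Icc (0:ℝ) 1, a * s - b * s ^ 2 ≤ g s - g 0) : a ≤ L := by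
  have hlim : Tendsto (fun s : ℝ => a - b * s) (𝓝[>] 0) (𝓝 a) :=
    ((continuous_const.sub (continuous_const_mul b)).tendsto' 0 a (by simp)).mono_left
      nhdsWithin_le_nhds
  refine le_of_tendsto_of_tendsto hlim (hasDerivWithinAt_Ioi_zero_iff.1 hg) ?_
  filter_upwards [Ioc_mem_nhdsGT one_pos] with s hs
  rw [le_div_iff₀ hs.1]
  nlinarith [h s ⟨hs.1.le, hs.2⟩]

namespace IsGeodesic

variable [MetricSpace M] {γ : ℝ → M}

lemma dist_zero_left_s16 (hγ : IsGeodesic γ) {t : ℝ} (ht : t ∈ Icc (0:ℝ) 1) :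
    dist (γ 0) (γ t) = t * dist (γ 0) (γ 1) := by
  rw [hγ 0 (left_mem_Icc.2 zero_le_one) t ht, zero_sub, abs_neg, abs_of_nonneg ht.1]

lemma dist_one_right (hγ : IsGeodesic γ) {t : ℝ} (ht : t ∈ Icc (0:ℝ) 1) :
    dist (γ t) (γ 1) = (1 - t) * dist (γ 0) (γ 1) := by
  rw [hγ t ht 1 (right_mem_Icc.2 zero_le_one), abs_sub_comm, abs_of_nonneg (sub_nonneg.2 ht.2)]

lemma eqOn_const_of_eq (hγ : IsGeodesic γ) (h : γ 0 = γ 1) :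
    EqOn γ (fun _ => γ 0) (Icc 0 1) := fun t ht =>
  (dist_eq_zero.1 (by rw [hγ.dist_zero_left_s16 ht, h, dist_self, mul_zero])).symm

lemma perp_of_forall_dist_le (hγ : IsGeodesic γ) {η : ℝ → M}
    (h : ∀ s ∈ Icc (0:ℝ) 1, dist (γ 0) (γ 1) ≤ dist (η s) (γ 1)) : Perp γ η := by
  intro t ht s hs
  rw [hγ.dist_zero_left_s16 ht]
  have := dist_triangle (η s) (γ t) (γ 1)
  nlinarith [h s hs, hγ.dist_one_right ht]

lemma exists_hasDerivWithinAt_dist_sq {p : ℝ} (hp : 1 ≤ p) (hγ : IsGeodesic γ) (q : M)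
    (hconv : ConvexOn ℝ (Icc 0 1) fun t => dist q (γ t) ^ p) :
    ∃ L, HasDerivWithinAt (fun t => dist (γ t) q ^ 2) L (Ioi 0) 0 := by
  set c := dist (γ 0) (γ 1)
  rcases eq_or_ne (γ 0) q with rfl | hq
  · have hsq : HasDerivAt (fun t : ℝ => (t * c) ^ 2) 0 0 := by
      simpa using ((hasDerivAt_id (0:ℝ)).mul_const c).fun_pow 2
    refine ⟨0, hsq.hasDerivWithinAt.congr_of_eventuallyEq ?_ (by simp)⟩
    filter_upwards [Ioc_mem_nhdsGT one_pos] with t ht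
    rw [dist_comm, hγ.dist_zero_left_s16 ⟨ht.1.le, ht.2⟩]
  set d₀ := dist q (γ 0)
  have hd₀ : 0 < d₀ := dist_pos.2 hq.symm
  have hslope : ∀ t ∈ Ioo (0:ℝ) 1,
      -(p * d₀ ^ (p - 1) * c) ≤ slope (fun t => dist q (γ t) ^ p) 0 t := by
    intro t ht
    have hdist : d₀ - t * c ≤ dist q (γ t) := by
      have := dist_triangle q (γ t) (γ 0)
      rw [dist_comm (γ t), hγ.dist_zero_left_s16 (Ioo_subset_Icc_self ht)] at this
      linarith
    have htan := Real.rpow_add_mul_sub_le_rpow hp hd₀ (dist_nonneg (x := q) (y := γ t))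
    have hcoef : 0 ≤ p * d₀ ^ (p - 1) := by positivity
    rw [slope_def_field, sub_zero, le_div_iff₀ ht.1]
    nlinarith [mul_le_mul_of_nonneg_left (sub_le_sub_right hdist d₀) hcoef]
  obtain ⟨L, hL⟩ := hconv.exists_hasDerivWithinAt_Ioi one_pos hslope
  have hroot := (Real.hasDerivAt_rpow_const (p := 2 / p)
    (Or.inl (Real.rpow_pos_of_pos hd₀ p).ne')).comp_hasDerivWithinAt (0:ℝ) hL
  refine ⟨_, hroot.congr (fun t _ => ?_) ?_⟩ <;>
  · simp only [Function.comp_apply]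
    rw [← Real.rpow_mul dist_nonneg, mul_div_cancel₀ _ (by linarith : p ≠ 0), Real.rpow_two,
      dist_comm]

end IsGeodesic

def liftWithSlope (γ : ℝ → M) (β : ℝ) : ℝ → WithLp 2 (M × ℝ) :=
  fun s => WithLp.toLp 2 (γ s, β * s)

section liftWithSlope

variable [MetricSpace M] {γ η : ℝ → M}

lemma dist_liftWithSlope_sq (γ η : ℝ → M) (α β s t : ℝ) :
    dist (liftWithSlope γ β s) (liftWithSlope η α t) ^ 2 =
      dist (γ s) (η t) ^ 2 + (β * s - α * t) ^ 2 := by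
  rw [liftWithSlope, liftWithSlope, WithLp.prod_dist_eq_add (by norm_num)]
  simp only [ENNReal.toReal_ofNat, Real.rpow_two, Real.dist_eq, sq_abs, one_div]
  exact_mod_cast Real.rpow_inv_natCast_pow (n := 2) (by positivity) two_ne_zero

lemma IsGeodesic.liftWithSlope (hγ : IsGeodesic γ) (β : ℝ) :
    IsGeodesic (liftWithSlope γ β) := by
  intro s hs t ht
  rw [← sq_eq_sq₀ dist_nonneg (by positivity), mul_pow, dist_liftWithSlope_sq,
    dist_liftWithSlope_sq, hγ s hs t ht, mul_pow, sq_abs]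
  ring

lemma perp_liftWithSlope_iff (hγ : IsGeodesic γ) (h0 : γ 0 = η 0) (α β : ℝ) :
    Perp (liftWithSlope γ β) (liftWithSlope η α) ↔ ∀ t ∈ Icc (0:ℝ) 1,
      2 * α * β * t - α ^ 2 * t ^ 2 ≤ dist (η t) (γ 1) ^ 2 - dist (η 0) (γ 1) ^ 2 := by
  have key : ∀ t, dist (liftWithSlope γ β 0) (liftWithSlope γ β 1) ≤
      dist (liftWithSlope η α t) (liftWithSlope γ β 1) ↔
      2 * α * β * t - α ^ 2 * t ^ 2 ≤ dist (η t) (γ 1) ^ 2 - dist (η 0) (γ 1) ^ 2 := by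
    intro t
    rw [← pow_le_pow_iff_left₀ dist_nonneg dist_nonneg two_ne_zero, dist_liftWithSlope_sq,
      dist_liftWithSlope_sq, h0]
    constructor <;> intro h <;> linarith
  constructor
  · exact fun h t ht => (key t).1 (h 1 (right_mem_Icc.2 zero_le_one) t ht)
  · exact fun h => (hγ.liftWithSlope β).perp_of_forall_dist_le fun t ht => (key t).2 (h t ht)

end liftWithSlope

lemma SO.le_of_hasDerivWithinAt_dist_sq [MetricSpace M] (hSO : SO (WithLp 2 (M × ℝ)))
    {γ η : ℝ → M} (hγ : IsGeodesic γ) (hη : IsGeodesic η) (h0 : γ 0 = η 0) {L₁ L₂ : ℝ}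
    (h₁ : HasDerivWithinAt (fun t => dist (η t) (γ 1) ^ 2) L₁ (Ioi 0) 0)
    (h₂ : HasDerivWithinAt (fun s => dist (γ s) (η 1) ^ 2) L₂ (Ioi 0) 0) :
    L₁ ≤ L₂ := by
  refine le_of_forall_lt_imp_le_of_dense fun m hm => ?_
  obtain ⟨K, hK, hbound⟩ :=
    exists_quadratic_lower_bound_of_lt h₁ (fun t _ => sq_nonneg (dist (η t) (γ 1))) hm
  set α := √K
  set β := m / (2 * α)
  have hαβ : 2 * α * β = m := mul_div_cancel₀ m (by positivity)
  have hα : α ^ 2 = K := Real.sq_sqrt hK.le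
  have hperp : Perp (liftWithSlope γ β) (liftWithSlope η α) :=
    (perp_liftWithSlope_iff hγ h0 α β).2 fun t ht => by rw [hαβ, hα]; exact hbound t ht
  have hperp' := hSO _ _ (hγ.liftWithSlope β) (hη.liftWithSlope α)
    (by simp [liftWithSlope, h0]) hperp
  refine le_of_hasDerivWithinAt_of_quadratic_lower_bound h₂ (b := β ^ 2) fun s hs => ?_
  have := (perp_liftWithSlope_iff hη h0.symm β α).1 hperp' s hs
  rwa [show 2 * β * α = m by rw [← hαβ]; ring] at this

theorem stmt16_general [MetricSpace M]
    (p : ℝ) (hp : 1 < p)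
    (hpc : ∀ x : M, ∀ γ : ℝ → M, IsGeodesic γ → γ 0 ≠ γ 1 →
      StrictConvexOn ℝ (Set.Icc (0:ℝ) 1) (fun t => dist x (γ t) ^ p))
    (hSOstar : SO (WithLp 2 (M × ℝ)))
    (γ η : ℝ → M) (hγ : IsGeodesic γ) (hη : IsGeodesic η) (h0 : γ 0 = η 0) :
    ∃ L : ℝ,
      Filter.Tendsto (fun t => (dist (η t) (γ 1) ^ 2 - dist (η 0) (γ 1) ^ 2) / t)
        (nhdsWithin 0 (Set.Ioi 0)) (nhds L) ∧
      Filter.Tendsto (fun s => (dist (η 1) (γ s) ^ 2 - dist (η 1) (γ 0) ^ 2) / s)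
        (nhdsWithin 0 (Set.Ioi 0)) (nhds L) := by
  have hconv : ∀ ζ : ℝ → M, IsGeodesic ζ → ∀ q : M,
      ConvexOn ℝ (Icc 0 1) fun t => dist q (ζ t) ^ p := by
    intro ζ hζ q
    by_cases hc : ζ 0 = ζ 1
    · exact (convexOn_const _ (convex_Icc 0 1)).congr fun t ht => by
        rw [hζ.eqOn_const_of_eq hc ht]
    · exact (hpc q ζ hζ hc).convexOn
  obtain ⟨L₁, h₁⟩ := hη.exists_hasDerivWithinAt_dist_sq hp.le (γ 1) (hconv η hη (γ 1))
  obtain ⟨L₂, h₂⟩ := hγ.exists_hasDerivWithinAt_dist_sq hp.le (η 1) (hconv γ hγ (η 1))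
  have hL : L₁ = L₂ := le_antisymm (hSOstar.le_of_hasDerivWithinAt_dist_sq hγ hη h0 h₁ h₂)
    (hSOstar.le_of_hasDerivWithinAt_dist_sq hη hγ h0.symm h₂ h₁)
  refine ⟨L₁, hasDerivWithinAt_Ioi_zero_iff.1 h₁, ?_⟩
  simp_rw [dist_comm (η 1), hL]
  exact hasDerivWithinAt_Ioi_zero_iff.1 h₂

/-- Strict p-convexity + stable symmetric orthogonality (SO) for the L²-product
M ×₂ ℝ implies first-variation symmetry. -/
theorem stmt16 [MetricSpace M] (hgeo : GeodesicSpace M)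
    (p : ℝ) (hp : 1 < p)
    (hpc : ∀ x : M, ∀ γ : ℝ → M, IsGeodesic γ → γ 0 ≠ γ 1 →
      StrictConvexOn ℝ (Set.Icc (0:ℝ) 1) (fun t => dist x (γ t) ^ p))
    (hSOstar : SO (WithLp 2 (M × ℝ)))
    (γ η : ℝ → M) (hγ : IsGeodesic γ) (hη : IsGeodesic η) (h0 : γ 0 = η 0) :
    ∃ L : ℝ,
      Filter.Tendsto (fun t => (dist (η t) (γ 1) ^ 2 - dist (η 0) (γ 1) ^ 2) / t)
        (nhdsWithin 0 (Set.Ioi 0)) (nhds L) ∧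
      Filter.Tendsto (fun s => (dist (η 1) (γ s) ^ 2 - dist (η 1) (γ 0) ^ 2) / s)
        (nhdsWithin 0 (Set.Ioi 0)) (nhds L) :=
  stmt16_general p hp hpc hSOstar γ η hγ hη h0
end

section
/- If the L²-product M ×₂ ℝ of a geodesic metric space M with ℝ satisfies the symmetric orthogonality property (SO) and M is a normed vector space (ℝ², ‖·‖), then ‖·‖ is induced by an inner product. -/
/-!
Let `ρ(x, y)` be the right derivative at `0` of the convex function `t ↦ ‖x + t • y‖² / 2`
(the upper semi-inner product). Birkhoff orthogonality `v ⊥ w` says exactly `ρ(v, w) ≥ 0`, and in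
`E ×₂ ℝ` one has `ρ((x, a), (y, b)) = ρ(x, y) + a b`. Since `(x, 1) ⊥ (y, -ρ(x, y))`, property (SO)
gives `ρ(x, y) ≤ ρ(y, x)`, so `ρ` is symmetric on `E`. Then `ρ(x + t y, y) = ρ(y, x) + t ‖y‖²`: the
right derivative of `t ↦ ‖x + t y‖²` is that of the quadratic `‖x‖² + 2 t ρ(y, x) + t² ‖y‖²`, which
pins down `‖x ± y‖²` and yields the parallelogram law.
-/

/-- Birkhoff orthogonality (segment convention). -/
def BPerp {E : Type*} [NormedAddCommGroup E] [NormedSpace ℝ E] (v w : E) : Prop :=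
  ∀ s : ℝ, 0 ≤ s → ‖v‖ ≤ ‖v + s • w‖

open Set Filter Topology

section SemiInner

variable {F : Type*} [NormedAddCommGroup F] [NormedSpace ℝ F]

noncomputable def normSqLine (x y : F) (t : ℝ) : ℝ := ‖x + t • y‖ ^ 2 / 2

noncomputable def semiInner (x y : F) : ℝ := sInf (slope (normSqLine x y) 0 '' Ioi 0)

lemma convexOn_normSqLine (x y : F) : ConvexOn ℝ univ (normSqLine x y) := by
  have hline : (fun t : ℝ => ‖x + t • y‖) = norm ∘ AffineMap.lineMap x (x + y) := by
    ext t; simp [AffineMap.lineMap_apply, add_comm]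
  have hnorm : ConvexOn ℝ univ fun t : ℝ => ‖x + t • y‖ :=
    hline ▸ convexOn_univ_norm.comp_affineMap _
  have hsq : normSqLine x y = fun t => (2 : ℝ)⁻¹ • ((fun t : ℝ => ‖x + t • y‖) ^ 2) t := by
    ext t
    simp [normSqLine, div_eq_inv_mul]
  rw [hsq]
  exact (hnorm.pow (fun _ _ => norm_nonneg _) 2).smul (by norm_num)

lemma slope_normSqLine (x y : F) (s : ℝ) :
    slope (normSqLine x y) 0 s = (‖x + s • y‖ ^ 2 - ‖x‖ ^ 2) / (2 * s) := by
  simp only [slope_def_field, normSqLine, zero_smul, add_zero, sub_zero]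
  field_simp

lemma slope_normSqLine_neg_le (x y : F) {s : ℝ} (hs : 0 < s) :
    slope (normSqLine x y) 0 (-s) ≤ slope (normSqLine x y) 0 s :=
  (convexOn_normSqLine x y).slope_mono (mem_univ 0) ⟨mem_univ _, by simp [hs.ne']⟩
    ⟨mem_univ _, by simp [hs.ne']⟩ (by linarith)

lemma monotoneOn_slope_normSqLine (x y : F) : MonotoneOn (slope (normSqLine x y) 0) (Ioi 0) :=
  ((convexOn_normSqLine x y).slope_mono (mem_univ 0)).mono fun _ hs =>
    ⟨mem_univ _, (mem_Ioi.1 hs).ne'⟩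

lemma bddBelow_slope_normSqLine (x y : F) : BddBelow (slope (normSqLine x y) 0 '' Ioi 0) := by
  refine ⟨slope (normSqLine x y) 0 (-1), ?_⟩
  rintro _ ⟨s, hs, rfl⟩
  exact ((convexOn_normSqLine x y).slope_mono (mem_univ 0)) ⟨mem_univ _, by norm_num⟩
    ⟨mem_univ _, (mem_Ioi.1 hs).ne'⟩ (by linarith [mem_Ioi.1 hs])

lemma semiInner_le_slope (x y : F) {s : ℝ} (hs : 0 < s) :
    semiInner x y ≤ slope (normSqLine x y) 0 s :=
  csInf_le (bddBelow_slope_normSqLine x y) ⟨s, hs, rfl⟩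

lemma sq_norm_add_two_mul_semiInner_le (x y : F) {s : ℝ} (hs : 0 < s) :
    ‖x‖ ^ 2 + 2 * s * semiInner x y ≤ ‖x + s • y‖ ^ 2 := by
  have h := semiInner_le_slope x y hs
  rw [slope_normSqLine, le_div_iff₀ (by positivity)] at h
  linarith

lemma tendsto_slope_normSqLine (x y : F) :
    Tendsto (slope (normSqLine x y) 0) (𝓝[>] 0) (𝓝 (semiInner x y)) :=
  (monotoneOn_slope_normSqLine x y).tendsto_nhdsGT (bddBelow_slope_normSqLine x y)

lemma semiInner_neg_left (x y : F) : semiInner (-x) y = semiInner x (-y) := by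
  have h : normSqLine (-x) y = normSqLine x (-y) := by
    ext t
    rw [normSqLine, normSqLine, ← norm_neg, neg_add, neg_neg, smul_neg]
  rw [semiInner, semiInner, h]

lemma semiInner_add_semiInner_neg_nonneg (x y : F) : 0 ≤ semiInner x y + semiInner x (-y) := by
  have h : slope (normSqLine x (-y)) 0 = fun s => -slope (normSqLine x y) 0 (-s) := by
    ext s
    simp only [slope_def_field, normSqLine, smul_neg, ← neg_smul, neg_zero]
    ring
  refine ge_of_tendsto ((tendsto_slope_normSqLine x y).add (tendsto_slope_normSqLine x (-y))) ?_
  filter_upwards [self_mem_nhdsWithin] with s hs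
  rw [h]
  linarith [slope_normSqLine_neg_le x y hs]

lemma slope_normSqLine_add_smul_self (x w : F) (c : ℝ) {s : ℝ} (hs : 0 < s)
    (hsc : 0 < 1 + s * c) :
    slope (normSqLine x (w + c • x)) 0 s =
      (1 + s * c) * slope (normSqLine x w) 0 (s / (1 + s * c)) + (c + s * c ^ 2 / 2) * ‖x‖ ^ 2 := by
  have hrescale : x + s • (w + c • x) = (1 + s * c) • (x + (s / (1 + s * c)) • w) := by
    rw [smul_add (1 + s * c) x, smul_smul, mul_div_cancel₀ _ hsc.ne']
    module
  rw [slope_normSqLine, slope_normSqLine, hrescale, norm_smul, Real.norm_of_nonneg hsc.le]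
  field_simp
  ring

lemma semiInner_add_smul_self (x w : F) (c : ℝ) :
    semiInner x (w + c • x) = semiInner x w + c * ‖x‖ ^ 2 := by
  have hid : Tendsto (fun s : ℝ => s) (𝓝[>] 0) (𝓝 0) := nhdsWithin_le_nhds
  have hden : Tendsto (fun s : ℝ => 1 + s * c) (𝓝[>] 0) (𝓝 1) :=
    ((by fun_prop : Continuous fun s : ℝ => 1 + s * c).tendsto' 0 1 (by simp)).mono_left
      nhdsWithin_le_nhds
  have hpos : ∀ᶠ s in 𝓝[>] (0 : ℝ), 0 < 1 + s * c := hden.eventually (lt_mem_nhds one_pos)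
  have hrescale : Tendsto (fun s : ℝ => s / (1 + s * c)) (𝓝[>] 0) (𝓝[>] 0) := by
    refine tendsto_nhdsWithin_iff.2 ⟨?_, ?_⟩
    · have h := hid.div hden one_ne_zero
      rwa [zero_div] at h
    · filter_upwards [self_mem_nhdsWithin, hpos] with s hs hsc
      exact div_pos hs hsc
  have hcorr : Tendsto (fun s : ℝ => (c + s * c ^ 2 / 2) * ‖x‖ ^ 2) (𝓝[>] 0) (𝓝 (c * ‖x‖ ^ 2)) :=
    ((by fun_prop : Continuous fun s : ℝ => (c + s * c ^ 2 / 2) * ‖x‖ ^ 2).tendsto' 0 _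
      (by simp)).mono_left nhdsWithin_le_nhds
  have hlim := (hden.mul ((tendsto_slope_normSqLine x w).comp hrescale)).add hcorr
  rw [one_mul] at hlim
  refine tendsto_nhds_unique (tendsto_slope_normSqLine x (w + c • x)) (hlim.congr' ?_)
  filter_upwards [self_mem_nhdsWithin, hpos] with s hs hsc
  exact (slope_normSqLine_add_smul_self x w c hs hsc).symm

lemma bPerp_iff_semiInner_nonneg (v w : F) : BPerp v w ↔ 0 ≤ semiInner v w := by
  constructor
  · intro h
    refine le_csInf (nonempty_Ioi.image _) ?_
    rintro _ ⟨s, hs, rfl⟩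
    rw [slope_normSqLine]
    exact div_nonneg (sub_nonneg.2 (pow_le_pow_left₀ (norm_nonneg _) (h s (le_of_lt hs)) 2))
      (by positivity [mem_Ioi.1 hs])
  · intro h s hs
    rcases hs.eq_or_lt with rfl | hs
    · simp
    have hsq := sq_norm_add_two_mul_semiInner_le v w hs
    exact (pow_le_pow_iff_left₀ (norm_nonneg _) (norm_nonneg _) two_ne_zero).1 (by nlinarith)

lemma normSqLine_toLp_prod (x y : F) (a b t : ℝ) :
    normSqLine (WithLp.toLp 2 (x, a)) (WithLp.toLp 2 (y, b)) t =
      normSqLine x y t + (a + t * b) ^ 2 / 2 := by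
  rw [normSqLine, normSqLine, ← WithLp.toLp_smul, ← WithLp.toLp_add, WithLp.prod_norm_sq_eq_of_L2]
  simp
  ring

lemma semiInner_toLp_prod (x y : F) (a b : ℝ) :
    semiInner (WithLp.toLp 2 (x, a)) (WithLp.toLp 2 (y, b)) = semiInner x y + a * b := by
  have hcorr : Tendsto (fun s : ℝ => a * b + s * b ^ 2 / 2) (𝓝[>] 0) (𝓝 (a * b)) :=
    ((by fun_prop : Continuous fun s : ℝ => a * b + s * b ^ 2 / 2).tendsto' 0 _
      (by simp)).mono_left nhdsWithin_le_nhds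
  refine tendsto_nhds_unique (tendsto_slope_normSqLine _ _)
    (((tendsto_slope_normSqLine x y).add hcorr).congr' ?_)
  filter_upwards [self_mem_nhdsWithin] with s hs
  rw [slope_def_field, slope_def_field, normSqLine_toLp_prod, normSqLine_toLp_prod]
  field_simp [(mem_Ioi.1 hs).ne']
  ring

lemma semiInner_comm_of_bPerp_symm
    (hSO : ∀ v w : WithLp 2 (F × ℝ), BPerp v w → BPerp w v) (x y : F) :
    semiInner x y = semiInner y x := by
  have key : ∀ u v : F, semiInner u v ≤ semiInner v u := by
    intro u v
    have h := hSO (WithLp.toLp 2 (u, 1)) (WithLp.toLp 2 (v, -semiInner u v))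
      (by rw [bPerp_iff_semiInner_nonneg, semiInner_toLp_prod]; linarith)
    rw [bPerp_iff_semiInner_nonneg, semiInner_toLp_prod] at h
    linarith
  exact le_antisymm (key x y) (key y x)

lemma monotone_of_forall_sub_mul_sq_le {g : ℝ → ℝ} (C : ℝ)
    (h : ∀ t u, 0 < u → g t - C * u ^ 2 ≤ g (t + u)) : Monotone g := by
  intro a b hab
  rcases hab.eq_or_lt with rfl | hab
  · rfl
  have htele : ∀ n : ℕ, 0 < n → g a - C * (b - a) ^ 2 / n ≤ g b := by
    intro n hn
    set u := (b - a) / n with hu_def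
    have hu : 0 < u := div_pos (sub_pos.2 hab) (Nat.cast_pos.2 hn)
    have hstep : ∀ k : ℕ, g a - k * (C * u ^ 2) ≤ g (a + k * u) := by
      intro k
      induction k with
      | zero => simp
      | succ k ih =>
        have hk : a + ((k : ℝ) + 1) * u = a + k * u + u := by ring
        rw [Nat.cast_succ, hk]
        linarith [h (a + k * u) u hu]
    have hn' : (n : ℝ) ≠ 0 := Nat.cast_ne_zero.2 hn.ne'
    convert hstep n using 2
    · rw [hu_def]
      field_simp
    · rw [hu_def]
      field_simp
      ring
  refine le_of_tendsto ?_ (eventually_atTop.2 ⟨1, htele⟩)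
  simpa using tendsto_const_nhds.sub (tendsto_const_div_atTop_nhds_zero_nat (C * (b - a) ^ 2))

lemma sq_norm_add_le_of_semiInner_comm (hsym : ∀ x y : F, semiInner x y = semiInner y x)
    (x y : F) : ‖x‖ ^ 2 + 2 * semiInner y x + ‖y‖ ^ 2 ≤ ‖x + y‖ ^ 2 := by
  have hmono : Monotone fun t : ℝ =>
      ‖x + t • y‖ ^ 2 - 2 * t * semiInner y x - t ^ 2 * ‖y‖ ^ 2 := by
    refine monotone_of_forall_sub_mul_sq_le (‖y‖ ^ 2) fun t u hu => ?_
    have hstep := sq_norm_add_two_mul_semiInner_le (x + t • y) y hu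
    rw [hsym, semiInner_add_smul_self, add_assoc, ← add_smul] at hstep
    linear_combination hstep
  have h01 := hmono zero_le_one
  norm_num at h01
  linarith

lemma parallelogram_of_semiInner_comm (hsym : ∀ x y : F, semiInner x y = semiInner y x)
    (x y : F) : ‖x + y‖ ^ 2 + ‖x - y‖ ^ 2 = 2 * ‖x‖ ^ 2 + 2 * ‖y‖ ^ 2 := by
  -- Summed, `h1`, `h2` give `‖x + y‖² + ‖x - y‖² ≥ 2‖x‖² + 2‖y‖² + 2σ` and `h3`, `h4` give
  -- `≤ 2‖x‖² + 2‖y‖² - 2σ`, where `σ = semiInner y x + semiInner y (-x) ≥ 0`.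
  have h1 := sq_norm_add_le_of_semiInner_comm hsym x y
  have h2 := sq_norm_add_le_of_semiInner_comm hsym x (-y)
  have h3 := sq_norm_add_le_of_semiInner_comm hsym (x + y) (-y)
  have h4 := sq_norm_add_le_of_semiInner_comm hsym (x - y) y
  have e3 : semiInner (-y) (x + y) = semiInner y (-x) - ‖y‖ ^ 2 := by
    rw [semiInner_neg_left, show -(x + y) = -x + (-1 : ℝ) • y by module, semiInner_add_smul_self]
    ring
  have e4 : semiInner y (x - y) = semiInner y x - ‖y‖ ^ 2 := by
    rw [show x - y = x + (-1 : ℝ) • y by module, semiInner_add_smul_self]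
    ring
  rw [semiInner_neg_left, norm_neg, ← sub_eq_add_neg] at h2
  rw [e3, norm_neg, add_neg_cancel_right] at h3
  rw [e4, sub_add_cancel] at h4
  linarith [semiInner_add_semiInner_neg_nonneg y x]

end SemiInner

theorem stmt18_general {E : Type*} [NormedAddCommGroup E] [NormedSpace ℝ E]
    (hSO : ∀ v w : WithLp 2 (E × ℝ), BPerp v w → BPerp w v) :
    InnerProductSpaceable E :=
  ⟨fun x y => by
    linear_combination parallelogram_of_semiInner_comm (semiInner_comm_of_bPerp_symm hSO) x y⟩

/-- If the L²-product E ×₂ ℝ of a two-dimensional normed space E with ℝ has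
symmetric Birkhoff orthogonality (property (SO)), then the norm of E is induced
by an inner product (parallelogram identity / `InnerProductSpaceable`). -/
theorem stmt18 {E : Type*} [NormedAddCommGroup E] [NormedSpace ℝ E]
    (hdim : Module.finrank ℝ E = 2)
    (hSO : ∀ v w : WithLp 2 (E × ℝ), BPerp v w → BPerp w v) :
    InnerProductSpaceable E :=
  stmt18_general hSO
end
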